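/- arXiv:2211.01095 — 5 statements merged into one kernel-verified Lean document; each statement's English description precedes it below -/
import Mathlib

section
/- Let α, σ : ℝ → ℝ be positive differentiable functions, let λ(t) = log(α(t)/σ(t)) be strictly decreasing with differentiable inverse t(λ), and define f(t) = d/dt log α(t) and g²(t) = d/dt σ²(t) − 2σ²(t) · d/dt log α(t). If x : ℝ → ℝ^D satisfies x(t) = (σ(t)/σ(s)) x(s) + σ(t) ∫_{λ(s)}^{λ(t)} e^λ X(λ) dλ for a continuous function X and all t, then x satisfies the ODE dx/dt = (f(t) + g²(t)/(2σ²(t))) x(t) − (α(t) g²(t)/(2σ²(t))) X(λ(t)). -/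
/-!
By the product rule and the fundamental theorem of calculus, the formula gives
`x' = (σ'/σ) x + σ Λ' e^Λ X(Λ) = (σ'/σ) x + α Λ' X(Λ)`, since `σ e^Λ = α`.
With `Λ' = α'/α - σ'/σ` this is the ODE, because `f + g²/(2σ²) = σ'/σ` and
`α g²/(2σ²) = α (σ'/σ - α'/α) = -α Λ'`.
-/

open Real intervalIntegral

section

variable {E : Type*} [NormedAddCommGroup E] [NormedSpace ℝ E] [CompleteSpace E]

theorem HasDerivAt.intervalIntegral_comp {φ : ℝ → E} (hφ : Continuous φ) (a : ℝ)
    {Λ : ℝ → ℝ} {Λ' t : ℝ} (hΛ : HasDerivAt Λ Λ' t) :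
    HasDerivAt (fun u => ∫ l in a..Λ u, φ l) (Λ' • φ (Λ t)) t :=
  (hφ.integral_hasStrictDerivAt a (Λ t)).hasDerivAt.scomp t hΛ

theorem hasDerivAt_of_variation_of_constants {σ Λ : ℝ → ℝ} {φ : ℝ → E} (hφ : Continuous φ)
    {s : ℝ} {x : ℝ → E}
    (hx : ∀ u, x u = (σ u / σ s) • x s + σ u • ∫ l in Λ s..Λ u, φ l)
    {σ' Λ' t : ℝ} (hσ : HasDerivAt σ σ' t) (hΛ : HasDerivAt Λ Λ' t) (hσt : σ t ≠ 0) :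
    HasDerivAt x ((σ' / σ t) • x t + (σ t * Λ') • φ (Λ t)) t := by
  have hD : HasDerivAt (fun u => (σ u / σ s) • x s + σ u • ∫ l in Λ s..Λ u, φ l) _ t :=
    ((hσ.div_const (σ s)).smul_const (x s)).add (hσ.smul (hΛ.intervalIntegral_comp hφ (Λ s)))
  rw [← funext hx] at hD
  refine hD.congr_deriv ?_
  rw [hx t]
  match_scalars <;> field_simp

end

theorem hasDerivAt_log_div {α σ : ℝ → ℝ} {α' σ' t : ℝ} (hα : HasDerivAt α α' t)
    (hσ : HasDerivAt σ σ' t) (hαt : α t ≠ 0) (hσt : σ t ≠ 0) :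
    HasDerivAt (fun u => log (α u / σ u)) (α' / α t - σ' / σ t) t := by
  refine ((hα.div hσ hσt).log (div_ne_zero hαt hσt)).congr_deriv ?_
  rw [Pi.div_apply]
  field_simp

theorem stmt0_general {D : ℕ} (α σ : ℝ → ℝ) (hα : ∀ t, 0 < α t) (hσ : ∀ t, 0 < σ t)
    (hαd : Differentiable ℝ α) (hσd : Differentiable ℝ σ)
    (Λ : ℝ → ℝ) (hΛ : ∀ t, Λ t = Real.log (α t / σ t))
    (f g2 : ℝ → ℝ)
    (hf : ∀ t, f t = deriv (fun u => Real.log (α u)) t)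
    (hg2 : ∀ t, g2 t = deriv (fun u => (σ u)^2) t
      - 2 * (σ t)^2 * deriv (fun u => Real.log (α u)) t)
    (X : ℝ → EuclideanSpace ℝ (Fin D)) (hX : Continuous X)
    (s : ℝ) (x : ℝ → EuclideanSpace ℝ (Fin D))
    (hx : ∀ t, x t = (σ t / σ s) • x s + σ t • ∫ l in (Λ s)..(Λ t), Real.exp l • X l) :
    ∀ t, HasDerivAt x ((f t + g2 t / (2 * (σ t)^2)) • x t
      - ((α t * g2 t) / (2 * (σ t)^2)) • X (Λ t)) t := by
  intro t
  have hαt := (hαd t).hasDerivAt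
  have hσt := (hσd t).hasDerivAt
  have hαne := (hα t).ne'
  have hσne := (hσ t).ne'
  have hΛt : HasDerivAt Λ (deriv α t / α t - deriv σ t / σ t) t := by
    rw [funext hΛ]
    exact hasDerivAt_log_div hαt hσt hαne hσne
  have hexpΛ : exp (Λ t) = α t / σ t := by rw [hΛ t, exp_log (div_pos (hα t) (hσ t))]
  refine (hasDerivAt_of_variation_of_constants (continuous_exp.smul hX) hx hσt hΛt
    hσne).congr_deriv ?_
  rw [Pi.smul_apply', hf, hg2, (hαt.log hαne).deriv, (hσt.fun_pow 2).deriv, hexpΛ, smul_smul]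
  match_scalars
  · field_simp
    ring
  · field_simp
    ring

/-- Exact-solution (variation of constants) formula for the data-prediction diffusion ODE:
if `x t = (σ t / σ s) • x s + σ t • ∫_{Λ s}^{Λ t} e^λ • X λ dλ`, then `x` solves
`dx/dt = (f t + g² t / (2 σ t ^ 2)) x t − (α t g² t / (2 σ t ^ 2)) X (Λ t)`. -/
theorem stmt0 {D : ℕ} (α σ : ℝ → ℝ) (hα : ∀ t, 0 < α t) (hσ : ∀ t, 0 < σ t)
    (hαd : Differentiable ℝ α) (hσd : Differentiable ℝ σ)
    (Λ : ℝ → ℝ) (hΛ : ∀ t, Λ t = Real.log (α t / σ t))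
    (hΛmono : StrictAnti Λ)
    (tinv : ℝ → ℝ) (htinv : Function.LeftInverse tinv Λ) (htinvd : Differentiable ℝ tinv)
    (f g2 : ℝ → ℝ)
    (hf : ∀ t, f t = deriv (fun u => Real.log (α u)) t)
    (hg2 : ∀ t, g2 t = deriv (fun u => (σ u)^2) t
      - 2 * (σ t)^2 * deriv (fun u => Real.log (α u)) t)
    (X : ℝ → EuclideanSpace ℝ (Fin D)) (hX : Continuous X)
    (s : ℝ) (x : ℝ → EuclideanSpace ℝ (Fin D))
    (hx : ∀ t, x t = (σ t / σ s) • x s + σ t • ∫ l in (Λ s)..(Λ t), Real.exp l • X l) :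
    ∀ t, HasDerivAt x ((f t + g2 t / (2 * (σ t)^2)) • x t
      - ((α t * g2 t) / (2 * (σ t)^2)) • X (Λ t)) t :=
  stmt0_general α σ hα hσ hαd hσd Λ hΛ f g2 hf hg2 X hX s x hx
end

section
/- With the notation of the single-step second-order solvers, let h = λ_{t_i} − λ_{t_{i−1}} > 0, r ∈ (0,1], and suppose u is given by the data-prediction intermediate step u = (σ_{s}/σ_{t_{i−1}}) x − α_{s}(e^{−rh} − 1) X(x), where X(x) = (x − σ_{t_{i−1}} E(x))/α_{t_{i−1}} and λ_s = λ_{t_{i−1}} + rh. Then u = (α_s/α_{t_{i−1}}) x − σ_s (e^{rh} − 1) E(x). Furthermore, e^{λ_{t_{i−1}}} (X(u, s) − X(x, t_{i−1})) = e^{−rh} (E(x, t_{i−1}) − E(u, s)), where X(·,·) = (· − σ_· E(·,·))/α_· denotes the data prediction at the respective time. -/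
/-!
Put `ρ = e^{rh}`. The log-SNR hypothesis says `α_s σ₁ = α₁ σ_s ρ`, i.e. `σ_s/σ₁ = α_s/(α₁ρ)` and
`σ_s/α_s = σ₁/(α₁ρ)`. Substituting the first relation into the data-prediction step and expanding
`X₁(x) = (x − σ₁E₁(x))/α₁` turns it into the noise-prediction step; substituting the second into
`X_s(u) − X₁(x)` leaves `(σ₁/(α₁ρ)) (E₁(x) − E_s(u))`, and multiplying by `e^{λ₁} = α₁/σ₁` gives the
damping factor `ρ⁻¹ = e^{−rh}`.
-/

namespace DPMSolver

lemma mul_cross_eq_of_log_div_eq {α₁ σ₁ αₛ σₛ c : ℝ} (hα₁ : 0 < α₁) (hσ₁ : 0 < σ₁)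
    (hαₛ : 0 < αₛ) (hσₛ : 0 < σₛ) (hlog : Real.log (αₛ / σₛ) = Real.log (α₁ / σ₁) + c) :
    αₛ * σ₁ = α₁ * σₛ * Real.exp c := by
  have hratio : αₛ / σₛ = α₁ / σ₁ * Real.exp c := by
    rw [← Real.exp_log (div_pos hαₛ hσₛ), hlog, Real.exp_add, Real.exp_log (div_pos hα₁ hσ₁)]
  field_simp at hratio
  linear_combination hratio

section Module

variable {K V : Type*} [Field K] [AddCommGroup V] [Module K V]

lemma dataStep_eq_noiseStep {α₁ σ₁ αₛ σₛ ρ : K} (hα₁ : α₁ ≠ 0) (hσ₁ : σ₁ ≠ 0) (hρ : ρ ≠ 0)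
    (hsnr : αₛ * σ₁ = α₁ * σₛ * ρ) (x e : V) :
    (σₛ / σ₁) • x - (αₛ * (ρ⁻¹ - 1)) • ((1 / α₁) • (x - σ₁ • e)) =
      (αₛ / α₁) • x - (σₛ * (ρ - 1)) • e := by
  match_scalars
  · field_simp
    linear_combination -hsnr
  · field_simp
    linear_combination (1 - ρ) * hsnr

lemma smul_dataPred_sub_eq_inv_smul {α₁ σ₁ αₛ σₛ ρ : K} (hα₁ : α₁ ≠ 0) (hσ₁ : σ₁ ≠ 0)
    (hαₛ : αₛ ≠ 0) (hρ : ρ ≠ 0) (hsnr : αₛ * σ₁ = α₁ * σₛ * ρ) {x u : V} (e₁ eₛ : V)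
    (hu : u = (αₛ / α₁) • x - (σₛ * (ρ - 1)) • e₁) :
    (α₁ / σ₁) • ((1 / αₛ) • (u - σₛ • eₛ) - (1 / α₁) • (x - σ₁ • e₁)) = ρ⁻¹ • (e₁ - eₛ) := by
  subst hu
  match_scalars
  · field_simp
    ring
  · field_simp
    linear_combination (ρ - 1) * hsnr
  · field_simp
    linear_combination hsnr

end Module

end DPMSolver

open DPMSolver in
theorem stmt9_general {D : ℕ} (α1 σ1 αs σs : ℝ)
    (hα1 : 0 < α1) (hσ1 : 0 < σ1) (hαs : 0 < αs) (hσs : 0 < σs)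
    (h r : ℝ)
    (hls : Real.log (αs/σs) = Real.log (α1/σ1) + r * h)
    (E1 Es : EuclideanSpace ℝ (Fin D) → EuclideanSpace ℝ (Fin D))
    (X1 Xs : EuclideanSpace ℝ (Fin D) → EuclideanSpace ℝ (Fin D))
    (hX1 : ∀ v, X1 v = (1/α1) • (v - σ1 • E1 v))
    (hXs : ∀ v, Xs v = (1/αs) • (v - σs • Es v))
    (x u : EuclideanSpace ℝ (Fin D))
    (hu : u = (σs/σ1) • x - (αs * (Real.exp (-(r*h)) - 1)) • X1 x) :
    u = (αs/α1) • x - (σs * (Real.exp (r*h) - 1)) • E1 x ∧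
    Real.exp (Real.log (α1/σ1)) • (Xs u - X1 x) =
      Real.exp (-(r*h)) • (E1 x - Es u) := by
  have hsnr := mul_cross_eq_of_log_div_eq hα1 hσ1 hαs hσs hls
  have hρ : Real.exp (r * h) ≠ 0 := (Real.exp_pos _).ne'
  have hu' : u = (αs/α1) • x - (σs * (Real.exp (r*h) - 1)) • E1 x := by
    rw [hu, hX1, Real.exp_neg]
    exact dataStep_eq_noiseStep hα1.ne' hσ1.ne' hρ hsnr x (E1 x)
  refine ⟨hu', ?_⟩
  rw [Real.exp_log (div_pos hα1 hσ1), hXs, hX1, Real.exp_neg]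
  exact smul_dataPred_sub_eq_inv_smul hα1.ne' hσ1.ne' hαs.ne' hρ hsnr (E1 x) (Es u) hu'

/-- The intermediate data-prediction step of DPM-Solver++(2S) rewritten with the noise
prediction model: `u = (α_s/α_{i−1}) x − σ_s (e^{rh} − 1) E₁(x)`, and the damping identity
`e^{λ_{i−1}} (X_s(u) − X₁(x)) = e^{−rh} (E₁(x) − E_s(u))`. -/
theorem stmt9 {D : ℕ} (α1 σ1 αs σs : ℝ)
    (hα1 : 0 < α1) (hσ1 : 0 < σ1) (hαs : 0 < αs) (hσs : 0 < σs)
    (h r : ℝ) (hh : 0 < h) (hr0 : 0 < r) (hr1 : r ≤ 1)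
    (hls : Real.log (αs/σs) = Real.log (α1/σ1) + r * h)
    (E1 Es : EuclideanSpace ℝ (Fin D) → EuclideanSpace ℝ (Fin D))
    (X1 Xs : EuclideanSpace ℝ (Fin D) → EuclideanSpace ℝ (Fin D))
    (hX1 : ∀ v, X1 v = (1/α1) • (v - σ1 • E1 v))
    (hXs : ∀ v, Xs v = (1/αs) • (v - σs • Es v))
    (x u : EuclideanSpace ℝ (Fin D))
    (hu : u = (σs/σ1) • x - (αs * (Real.exp (-(r*h)) - 1)) • X1 x) :
    u = (αs/α1) • x - (σs * (Real.exp (r*h) - 1)) • E1 x ∧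
    Real.exp (Real.log (α1/σ1)) • (Xs u - X1 x) =
      Real.exp (-(r*h)) • (E1 x - Es u) :=
  stmt9_general α1 σ1 αs σs hα1 hσ1 hαs hσs h r hls E1 Es X1 Xs hX1 hXs x u hu
end

section
/- Consider a sequence Δ_0, Δ_1, …, Δ_M ≥ 0 of nonnegative reals, step sizes h_1, …, h_M ∈ (0, h_max], and constants a_i ∈ (0, 1], C̃ > 0, satisfying Δ_i ≤ a_i Δ_{i−1} + C̃ h_i (Δ_{i−1} + Δ_{i−2} + h_i²) for i ≥ 2, with Δ_0 + Δ_1 ≤ K h_max². If Σ_i h_i ≤ L for a fixed L, then Δ_M ≤ C' h_max² for a constant C' depending only on C̃, K, L (via a discrete Grönwall argument), provided h_max is sufficiently small. -/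
set_option maxHeartbeats 1600000 in
/-- Discrete Grönwall lemma for the multistep recursion of DPM-Solver++(2M): if
`Δ_i ≤ a_i Δ_{i−1} + C h_i (Δ_{i−1} + Δ_{i−2} + h_i²)` with `a_i ∈ (0,1]`,
`Δ_0 + Δ_1 ≤ K h_max²` and `Σ h_i ≤ L`, then `Δ_M ≤ C' h_max²` for some `C'`
depending only on `C, K, L`, provided `h_max` is sufficiently small. -/
theorem stmt15 (C K L : ℝ) (hC : 0 < C) (hK : 0 < K) (hL : 0 < L) :
    ∃ C' ε : ℝ, 0 < C' ∧ 0 < ε ∧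
      ∀ (M : ℕ) (Δ h a : ℕ → ℝ) (hmax : ℝ),
        0 < hmax → hmax ≤ ε →
        (∀ i, 0 ≤ Δ i) →
        (∀ i, 1 ≤ i → i ≤ M → 0 < h i ∧ h i ≤ hmax) →
        (∀ i, 1 ≤ i → i ≤ M → 0 < a i ∧ a i ≤ 1) →
        (∀ i, 2 ≤ i → i ≤ M →
          Δ i ≤ a i * Δ (i-1) + C * h i * (Δ (i-1) + Δ (i-2) + (h i)^2)) →
        Δ 0 + Δ 1 ≤ K * hmax^2 →
        (∑ i ∈ Finset.Icc 1 M, h i) ≤ L →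
        Δ M ≤ C' * hmax^2 := by
  refine ⟨(K + C*L) * Real.exp (2*C*L), 1, by positivity, one_pos, ?_⟩
  intro M Δ h a hmax hmaxpos hmaxε hΔ hh ha hrec hinit hsum
  -- nonnegativity of h on the range
  have hnn : ∀ j ∈ Finset.Icc 1 M, 0 ≤ h j := by
    intro j hj
    simp only [Finset.mem_Icc] at hj
    exact (hh j hj.1 hj.2).1.le
  have hm2 : 0 ≤ hmax ^ 2 := by positivity
  -- key induction
  have key : ∀ i, 1 ≤ i → i ≤ M →
      max (Δ i) (Δ (i-1)) ≤ (K + C * ∑ j ∈ Finset.Icc 2 i, h j) * hmax^2 *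
        ∏ j ∈ Finset.Icc 2 i, (1 + 2*C*h j) := by
    intro i hi1
    induction i, hi1 using Nat.le_induction with
    | base =>
      simp only [Finset.Icc_eq_empty_of_lt (by norm_num : (1:ℕ) < 2),
        Finset.sum_empty, Finset.prod_empty, mul_zero, add_zero, mul_one]
      intro
      exact max_le (le_trans (le_add_of_nonneg_left (hΔ 0)) hinit)
        (le_trans (le_add_of_nonneg_right (hΔ 1)) hinit)
    | succ n hn ih =>
      intro hnM
      have hnM' : n ≤ M := le_trans (Nat.le_succ n) hnM
      have IH := ih hnM'
      have h2 : 2 ≤ n + 1 := by omega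
      have hhn := hh (n+1) (by omega) hnM
      have han := ha (n+1) (by omega) hnM
      have hr := hrec (n+1) h2 hnM
      have e1 : n + 1 - 1 = n := rfl
      have e2 : n + 1 - 2 = n - 1 := by omega
      rw [e1, e2] at hr
      set E := max (Δ n) (Δ (n-1)) with hE
      clear_value E
      have hEnn : 0 ≤ E := hE ▸ le_trans (hΔ n) (le_max_left _ _)
      have hstep : Δ (n+1) ≤ (1 + 2*C*h (n+1)) * E + C * h (n+1) * hmax^2 := by
        have h1 : a (n+1) * Δ n ≤ Δ n := by
          nlinarith [hΔ n, han.1, han.2]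
        have h2' : Δ n ≤ E := hE ▸ le_max_left _ _
        have h3 : Δ (n-1) ≤ E := hE ▸ le_max_right _ _
        have h4 : (h (n+1))^2 ≤ hmax^2 := by nlinarith [hhn.1, hhn.2]
        have hmono : Δ n + Δ (n-1) + (h (n+1))^2 ≤ 2*E + hmax^2 := by linarith
        have hch : 0 ≤ C * h (n+1) := mul_nonneg hC.le hhn.1.le
        have := mul_le_mul_of_nonneg_left hmono hch
        nlinarith
      -- set up products/sums
      set S := ∑ j ∈ Finset.Icc 2 n, h j with hS
      set P := ∏ j ∈ Finset.Icc 2 n, (1 + 2*C*h j) with hP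
      clear_value S P
      have hsumS : ∑ j ∈ Finset.Icc 2 (n+1), h j = S + h (n+1) := by
        rw [hS]; exact Finset.sum_Icc_succ_top h2 h
      have hprodP : ∏ j ∈ Finset.Icc 2 (n+1), (1 + 2*C*h j)
          = P * (1 + 2*C*h (n+1)) := by
        rw [hP]; exact Finset.prod_Icc_succ_top h2 _
      have hP1 : 1 ≤ P := by
        rw [hP]
        have : (∏ j ∈ Finset.Icc 2 n, (1:ℝ)) ≤ ∏ j ∈ Finset.Icc 2 n, (1 + 2*C*h j) := by
          apply Finset.prod_le_prod (fun _ _ => zero_le_one)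
          intro j hj
          simp only [Finset.mem_Icc] at hj
          have := (hh j (by omega) (by omega)).1
          nlinarith
        simpa using this
      have hSnn : 0 ≤ S := by
        rw [hS]
        apply Finset.sum_nonneg
        intro j hj
        simp only [Finset.mem_Icc] at hj
        exact (hh j (by omega) (by omega)).1.le
      have hf1 : (1:ℝ) ≤ 1 + 2*C*h (n+1) := by
        have := mul_nonneg hC.le hhn.1.le; linarith
      have hB : E ≤ (K + C * S) * hmax^2 * P := IH
      rw [hsumS, hprodP]
      have hPb : 1 ≤ P * (1 + 2*C*h (n+1)) :=
        le_trans hP1 (le_mul_of_one_le_right (le_trans zero_le_one hP1) hf1)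
      have goal2 : (1 + 2*C*h (n+1)) * E + C * h (n+1) * hmax^2
          ≤ (K + C * (S + h (n+1))) * hmax^2 * (P * (1 + 2*C*h (n+1))) := by
        have t1 : (1 + 2*C*h (n+1)) * E ≤
            (1 + 2*C*h (n+1)) * ((K + C*S) * hmax^2 * P) :=
          mul_le_mul_of_nonneg_left hB (by linarith)
        have t2 : C * h (n+1) * hmax^2 ≤ C * h (n+1) * hmax^2 * (P * (1 + 2*C*h (n+1))) :=
          le_mul_of_one_le_right (mul_nonneg (mul_nonneg hC.le hhn.1.le) hm2) hPb
        have idr : (1 + 2*C*h (n+1)) * ((K + C*S) * hmax^2 * P)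
            + C * h (n+1) * hmax^2 * (P * (1 + 2*C*h (n+1)))
            = (K + C * (S + h (n+1))) * hmax^2 * (P * (1 + 2*C*h (n+1))) := by ring
        linarith
      refine max_le (le_trans hstep goal2) ?_
      -- Δ ((n+1)-1) = Δ n ≤ E ≤ ...
      calc Δ (n+1-1) = Δ n := by rw [e1]
        _ ≤ E := hE ▸ le_max_left _ _
        _ ≤ (K + C * S) * hmax^2 * P := hB
        _ ≤ (K + C * (S + h (n+1))) * hmax^2 * (P * (1 + 2*C*h (n+1))) := by
            have hBPnn : 0 ≤ (K + C*S) * hmax^2 * P := by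
              have h5 : (0:ℝ) ≤ K + C*S := by
                have := mul_nonneg hC.le hSnn; linarith
              have hPnn0 : (0:ℝ) ≤ P := by linarith
              exact mul_nonneg (mul_nonneg h5 hm2) hPnn0
            have q1 : (K + C*S) * hmax^2 * P ≤ (K + C*S) * hmax^2 * P * (1 + 2*C*h (n+1)) :=
              le_mul_of_one_le_right hBPnn hf1
            have q3 : 0 ≤ C * h (n+1) * hmax^2 * (P * (1 + 2*C*h (n+1))) := by
              have hPnn0 : (0:ℝ) ≤ P := by linarith
              have h6 : (0:ℝ) ≤ 1 + 2*C*h (n+1) := by linarith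
              exact mul_nonneg (mul_nonneg (mul_nonneg hC.le hhn.1.le) hm2)
                (mul_nonneg hPnn0 h6)
            have idr : (K + C * (S + h (n+1))) * hmax^2 * (P * (1 + 2*C*h (n+1)))
                = (K + C*S) * hmax^2 * P * (1 + 2*C*h (n+1))
                  + C * h (n+1) * hmax^2 * (P * (1 + 2*C*h (n+1))) := by ring
            linarith
  -- conclude
  match M with
  | 0 =>
    calc Δ 0 ≤ Δ 0 + Δ 1 := le_add_of_nonneg_right (hΔ 1)
      _ ≤ K * hmax^2 := hinit
      _ ≤ (K + C*L) * Real.exp (2*C*L) * hmax^2 := by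
          have hx : K * hmax^2 ≤ (K + C*L) * hmax^2 := by nlinarith [mul_pos hC hL]
          have hy : (K + C*L) * hmax^2 ≤ (K + C*L) * hmax^2 * Real.exp (2*C*L) :=
            le_mul_of_one_le_right (by positivity) (Real.one_le_exp (by positivity))
          have hz : (K + C*L) * hmax^2 * Real.exp (2*C*L)
              = (K + C*L) * Real.exp (2*C*L) * hmax^2 := by ring
          linarith
  | (M+1) =>
    have hM1 : 1 ≤ M + 1 := by omega
    have hkey := key (M+1) hM1 le_rfl
    have hSle : ∑ j ∈ Finset.Icc 2 (M+1), h j ≤ L := by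
      refine le_trans (Finset.sum_le_sum_of_subset_of_nonneg ?_ ?_) hsum
      · exact Finset.Icc_subset_Icc (by omega) le_rfl
      · intro j hj _; exact hnn j hj
    have hSnn : 0 ≤ ∑ j ∈ Finset.Icc 2 (M+1), h j := by
      apply Finset.sum_nonneg
      intro j hj
      simp only [Finset.mem_Icc] at hj
      exact (hh j (by omega) (by omega)).1.le
    have hPle : ∏ j ∈ Finset.Icc 2 (M+1), (1 + 2*C*h j) ≤ Real.exp (2*C*L) := by
      calc ∏ j ∈ Finset.Icc 2 (M+1), (1 + 2*C*h j)
          ≤ ∏ j ∈ Finset.Icc 2 (M+1), Real.exp (2*C*h j) := by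
            apply Finset.prod_le_prod
            · intro j hj
              simp only [Finset.mem_Icc] at hj
              have h7 := (hh j (by omega) (by omega)).1
              have := mul_nonneg hC.le h7.le
              linarith
            · intro j _
              have := Real.add_one_le_exp (2*C*h j)
              linarith
        _ = Real.exp (∑ j ∈ Finset.Icc 2 (M+1), 2*C*h j) := (Real.exp_sum _ _).symm
        _ ≤ Real.exp (2*C*L) := by
            apply Real.exp_le_exp.mpr
            rw [← Finset.mul_sum]
            have := mul_le_mul_of_nonneg_left hSle (by linarith : (0:ℝ) ≤ 2*C)
            linarith
    have hPnn : 0 ≤ ∏ j ∈ Finset.Icc 2 (M+1), (1 + 2*C*h j) := by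
      apply Finset.prod_nonneg
      intro j hj
      simp only [Finset.mem_Icc] at hj
      have h7 := (hh j (by omega) (by omega)).1
      have := mul_nonneg hC.le h7.le
      linarith
    calc Δ (M+1) ≤ max (Δ (M+1)) (Δ (M+1-1)) := le_max_left _ _
      _ ≤ (K + C * ∑ j ∈ Finset.Icc 2 (M+1), h j) * hmax^2 *
          ∏ j ∈ Finset.Icc 2 (M+1), (1 + 2*C*h j) := hkey
      _ ≤ (K + C*L) * Real.exp (2*C*L) * hmax^2 := by
          have h1 : K + C * ∑ j ∈ Finset.Icc 2 (M+1), h j ≤ K + C*L := by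
            have := mul_le_mul_of_nonneg_left hSle hC.le; linarith
          have s1 : (K + C * ∑ j ∈ Finset.Icc 2 (M+1), h j) * hmax^2 *
              ∏ j ∈ Finset.Icc 2 (M+1), (1 + 2*C*h j)
              ≤ (K + C*L) * hmax^2 * ∏ j ∈ Finset.Icc 2 (M+1), (1 + 2*C*h j) :=
            mul_le_mul_of_nonneg_right (mul_le_mul_of_nonneg_right h1 hm2) hPnn
          have s2 : (K + C*L) * hmax^2 * ∏ j ∈ Finset.Icc 2 (M+1), (1 + 2*C*h j)
              ≤ (K + C*L) * hmax^2 * Real.exp (2*C*L) :=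
            mul_le_mul_of_nonneg_left hPle (by positivity)
          have : (K + C*L) * hmax^2 * Real.exp (2*C*L)
              = (K + C*L) * Real.exp (2*C*L) * hmax^2 := by ring
          linarith
end

section
/- Same setting as the previous Grönwall lemma but for the singlestep recursion: if Δ_i ≤ a_i Δ_{i−1} + C̃ h_i (Δ_{i−1} + h_i²) for all i ≥ 1, with a_i ∈ (0,1], Δ_0 = 0, and Σ h_i ≤ L, then Δ_M ≤ C' h_max² for h_max sufficiently small, where C' depends only on C̃ and L. Consequently DPM-Solver++(2S) converges with global error O(h_max²). -/
/-- Discrete Grönwall lemma for the singlestep recursion of DPM-Solver++(2S): if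
`Δ_i ≤ a_i Δ_{i−1} + C h_i (Δ_{i−1} + h_i²)` with `a_i ∈ (0,1]`, `Δ_0 = 0` and
`Σ h_i ≤ L`, then `Δ_M ≤ C' h_max²` for `h_max` sufficiently small, where `C'`
depends only on `C` and `L`; hence DPM-Solver++(2S) has global error `O(h_max²)`. -/
theorem stmt16 (C L : ℝ) (hC : 0 < C) (hL : 0 < L) :
    ∃ C' ε : ℝ, 0 < C' ∧ 0 < ε ∧
      ∀ (M : ℕ) (Δ h a : ℕ → ℝ) (hmax : ℝ),
        0 < hmax → hmax ≤ ε →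
        (∀ i, 0 ≤ Δ i) → Δ 0 = 0 →
        (∀ i, 1 ≤ i → i ≤ M → 0 < h i ∧ h i ≤ hmax) →
        (∀ i, 1 ≤ i → i ≤ M → 0 < a i ∧ a i ≤ 1) →
        (∀ i, 1 ≤ i → i ≤ M → Δ i ≤ a i * Δ (i-1) + C * h i * (Δ (i-1) + (h i)^2)) →
        (∑ i ∈ Finset.Icc 1 M, h i) ≤ L →
        Δ M ≤ C' * hmax^2 := by
  refine ⟨Real.exp (C * L) - 1, 1, ?_, one_pos, ?_⟩
  · nlinarith [Real.add_one_le_exp (C * L), mul_pos hC hL]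
  intro M Δ h a hmax hmax0 _ hΔ0 hΔinit hh ha hrec hsum
  have key : ∀ n, n ≤ M →
      Δ n ≤ hmax ^ 2 * (Real.exp (C * ∑ i ∈ Finset.Icc 1 n, h i) - 1) := by
    intro n
    induction n with
    | zero =>
      intro _
      simp [hΔinit]
    | succ n ih =>
      intro hnM
      have ihn := ih (le_of_lt (Nat.lt_of_succ_le hnM))
      have h1 : 1 ≤ n + 1 := Nat.le_add_left 1 n
      obtain ⟨hhp, hhm⟩ := hh (n + 1) h1 hnM
      obtain ⟨hap, ham⟩ := ha (n + 1) h1 hnM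
      have hr := hrec (n + 1) h1 hnM
      simp only [Nat.add_sub_cancel] at hr
      have hsplit : (∑ i ∈ Finset.Icc 1 (n + 1), h i) =
          (∑ i ∈ Finset.Icc 1 n, h i) + h (n + 1) :=
        Finset.sum_Icc_succ_top h1 h
      rw [hsplit, mul_add, Real.exp_add]
      set S := ∑ i ∈ Finset.Icc 1 n, h i with hS
      have he1 : 1 ≤ Real.exp (C * S) := by
        -- Δ n ≤ hmax^2 * (exp(C*S) - 1) and Δ n ≥ 0
        nlinarith [hΔ0 n, sq_nonneg hmax, hmax0, Real.exp_pos (C * S),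
          mul_pos (mul_pos hmax0 hmax0) (Real.exp_pos (C * S))]
      have he2 : 1 + C * h (n + 1) ≤ Real.exp (C * h (n + 1)) := by
        have := Real.add_one_le_exp (C * h (n + 1))
        linarith
      have hΔn := hΔ0 n
      have hhm2 : h (n + 1) ^ 2 ≤ hmax ^ 2 := by nlinarith
      -- Δ (n+1) ≤ Δ n + C h Δ n + C h hmax^2
      have step : Δ (n + 1) ≤ (1 + C * h (n + 1)) * Δ n + C * h (n + 1) * hmax ^ 2 := by
        nlinarith [mul_pos hC hhp]
      have expand : (1 + C * h (n + 1)) * (hmax ^ 2 * (Real.exp (C * S) - 1))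
          + C * h (n + 1) * hmax ^ 2
          ≤ hmax ^ 2 * (Real.exp (C * S) * Real.exp (C * h (n + 1)) - 1) := by
        nlinarith [sq_nonneg hmax, mul_pos hC hhp, Real.exp_pos (C * S)]
      calc Δ (n + 1) ≤ (1 + C * h (n + 1)) * Δ n + C * h (n + 1) * hmax ^ 2 := step
        _ ≤ (1 + C * h (n + 1)) * (hmax ^ 2 * (Real.exp (C * S) - 1))
              + C * h (n + 1) * hmax ^ 2 := by
            have : 0 ≤ 1 + C * h (n + 1) := by positivity
            nlinarith
        _ ≤ _ := expand
  have hfin := key M le_rfl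
  have hmono : Real.exp (C * ∑ i ∈ Finset.Icc 1 M, h i) ≤ Real.exp (C * L) := by
    apply Real.exp_le_exp.mpr
    exact mul_le_mul_of_nonneg_left hsum hC.le
  calc Δ M ≤ hmax ^ 2 * (Real.exp (C * ∑ i ∈ Finset.Icc 1 M, h i) - 1) := hfin
    _ ≤ (Real.exp (C * L) - 1) * hmax ^ 2 := by nlinarith [sq_nonneg hmax]
end

section
/- Let e^λ = α/σ and h = λ_t − λ_s. The first-order stochastic update x_t = (σ_t/σ_s) e^{−h} x_s + α_t(1 − e^{−2h}) X + σ_t √(1 − e^{−2h}) z (SDE-DPM-Solver++1) is equal in distribution to the generalized DDIM update x_t = α_t X + √(σ_t² − η²) E + η z with η = σ_t √(1 − e^{−2h}), where E = (x_s − α_s X)/σ_s is the corresponding noise prediction. -/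
/-- SDE-DPM-Solver++1 is the generalized DDIM update with
`η = σ_t √(1 − e^{−2h})`: with `h = λ_t − λ_s > 0` and `E = (x_s − α_s X)/σ_s`,
`(σ_t/σ_s) e^{−h} x_s + α_t(1 − e^{−2h}) X + σ_t √(1−e^{−2h}) z
  = α_t X + √(σ_t² − η²) E + η z`. -/
theorem stmt17 {D : ℕ} (αs αt σs σt : ℝ) (hαs : 0 < αs) (hαt : 0 < αt)
    (hσs : 0 < σs) (hσt : 0 < σt) (h η : ℝ)
    (hh : h = Real.log (αt/σt) - Real.log (αs/σs)) (hpos : 0 < h)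
    (hη : η = σt * Real.sqrt (1 - Real.exp (-(2*h))))
    (xs X z : EuclideanSpace ℝ (Fin D)) :
    (σt/σs * Real.exp (-h)) • xs + (αt * (1 - Real.exp (-(2*h)))) • X
        + (σt * Real.sqrt (1 - Real.exp (-(2*h)))) • z =
      αt • X + Real.sqrt (σt^2 - η^2) • ((1/σs) • (xs - αs • X)) + η • z := by
  have hu : (0:ℝ) ≤ 1 - Real.exp (-(2*h)) := by
    have : Real.exp (-(2*h)) ≤ 1 := Real.exp_le_one_iff.mpr (by linarith)
    linarith
  have hη2 : η^2 = σt^2 * (1 - Real.exp (-(2*h))) := by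
    rw [hη, mul_pow, Real.sq_sqrt hu]
  have hE : Real.exp (-h) = αs * σt / (αt * σs) := by
    rw [hh, neg_sub, Real.exp_sub, Real.exp_log (by positivity), Real.exp_log (by positivity)]
    field_simp
  have hsqrt : Real.sqrt (σt^2 - η^2) = σt * Real.exp (-h) := by
    have : σt^2 - η^2 = (σt * Real.exp (-h))^2 := by
      rw [hη2, mul_pow, ← Real.exp_nat_mul]
      ring_nf
    rw [this, Real.sqrt_sq (by positivity)]
  have hE2 : Real.exp (-(2*h)) = (Real.exp (-h))^2 := by
    rw [← Real.exp_nat_mul]; ring_nf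
  rw [hsqrt]
  match_scalars
  · field_simp
  · rw [hE2, hE]; field_simp; ring
  · rw [hη]
end
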